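/- arXiv:2310.10807 — 2 statements merged into one kernel-verified Lean document; each statement's English description precedes it below -/
import Mathlib

section
/- Let L : ℝ → ℝ be convex and lower-semicontinuous. Then for all x, θ ∈ ℝ^p and δ ≥ 0, max_{‖Δx‖ ≤ δ} L((x + Δx)ᵀθ) = max over s ∈ {-1, 1} of L(xᵀθ + δ s ‖θ‖_*), where ‖·‖_* denotes the dual norm of ‖·‖. -/
open Matrix

/-- The dual norm `‖θ‖_* = sup_{‖x‖ ≤ 1} |θᵀx|` of a norm `N` on `ℝ^p`. -/
noncomputable def dualNorm {p : ℕ} (N : (Fin p → ℝ) → ℝ) (θ : Fin p → ℝ) : ℝ :=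
  sSup {v | ∃ x : Fin p → ℝ, N x ≤ 1 ∧ v = |θ ⬝ᵥ x|}

/-! The image of the ball `{N ≤ δ}` under the functional `θ ⬝ᵥ ·` is the whole interval
`[-δ‖θ‖_*, δ‖θ‖_*]`: it is convex, and in finite dimension the unit ball is compact, so the
supremum defining `‖θ‖_*` is attained. Hence `(x + Δx)ᵀθ` ranges exactly over
`[xᵀθ - δ‖θ‖_*, xᵀθ + δ‖θ‖_*]`, and a convex function attains its maximum on an interval at an
endpoint. -/

open Set Metric

theorem ConvexOn.isGreatest_image_Icc {𝕜 β : Type*} [Field 𝕜] [LinearOrder 𝕜]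
    [IsStrictOrderedRing 𝕜] [AddCommMonoid β] [LinearOrder β] [IsOrderedAddMonoid β]
    [Module 𝕜 β] [PosSMulStrictMono 𝕜 β] {f : 𝕜 → β} {a b : 𝕜} (hab : a ≤ b)
    (hf : ConvexOn 𝕜 (Icc a b) f) :
    IsGreatest (f '' Icc a b) (max (f a) (f b)) := by
  refine ⟨?_, ?_⟩
  · rcases max_choice (f a) (f b) with h | h <;> rw [h]
    exacts [mem_image_of_mem f (left_mem_Icc.2 hab), mem_image_of_mem f (right_mem_Icc.2 hab)]
  · rintro _ ⟨z, hz, rfl⟩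
    exact hf.le_on_segment (left_mem_Icc.2 hab) (right_mem_Icc.2 hab) (by rwa [segment_eq_Icc hab])

namespace ContinuousLinearMap

variable {E : Type*} [NormedAddCommGroup E] [NormedSpace ℝ E] [FiniteDimensional ℝ E]

theorem exists_norm_le_one_apply_eq_norm (f : E →L[ℝ] ℝ) : ∃ v, ‖v‖ ≤ 1 ∧ f v = ‖f‖ := by
  obtain ⟨v, hv, hmax⟩ := (isCompact_closedBall (0 : E) 1).exists_isMaxOn
    (nonempty_closedBall.2 zero_le_one) f.continuous.continuousOn
  refine ⟨v, mem_closedBall_zero_iff.1 hv, le_antisymm ?_ ?_⟩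
  · exact (le_abs_self _).trans (f.unit_le_opNorm v (mem_closedBall_zero_iff.1 hv))
  · rw [← f.sSup_unitClosedBall_eq_norm]
    refine csSup_le ((nonempty_closedBall.2 zero_le_one).image _) ?_
    rintro _ ⟨w, hw, rfl⟩
    have hw' : -w ∈ closedBall (0 : E) 1 := by simpa using hw
    exact abs_le.2 ⟨neg_le.1 (by simpa using hmax hw'), hmax hw⟩

theorem image_closedBall_zero_eq_Icc (f : E →L[ℝ] ℝ) {δ : ℝ} (hδ : 0 ≤ δ) :
    f '' closedBall 0 δ = Icc (-(δ * ‖f‖)) (δ * ‖f‖) := by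
  obtain ⟨v, hv, hfv⟩ := f.exists_norm_le_one_apply_eq_norm
  have hmem : ∀ s, |s| ≤ δ → s * ‖f‖ ∈ f '' closedBall 0 δ := fun s hs =>
    ⟨s • v, mem_closedBall_zero_iff.2 <| by
      simpa [norm_smul] using mul_le_mul hs hv (norm_nonneg v) hδ, by simp [hfv]⟩
  refine Subset.antisymm ?_ ?_
  · rintro _ ⟨w, hw, rfl⟩
    rw [mem_Icc, ← abs_le, mul_comm]
    exact (f.le_opNorm w).trans (by gcongr; exact mem_closedBall_zero_iff.1 hw)
  · rw [← neg_mul]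
    exact ((convex_closedBall 0 δ).linear_image f.toLinearMap).ordConnected.out
      (hmem (-δ) (by simp [abs_of_nonneg hδ])) (hmem δ (abs_of_nonneg hδ).le)

end ContinuousLinearMap

theorem LinearMap.image_le_eq_Icc_of_norm_axioms {E : Type*} [AddCommGroup E] [Module ℝ E]
    [FiniteDimensional ℝ E] {N : E → ℝ} (hN_eq : ∀ v, N v = 0 ↔ v = 0)
    (hN_smul : ∀ (a : ℝ) v, N (a • v) = |a| * N v) (hN_add : ∀ v w, N (v + w) ≤ N v + N w)
    (f : E →ₗ[ℝ] ℝ) {δ : ℝ} (hδ : 0 ≤ δ) :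
    f '' {v | N v ≤ δ} = Icc (-(δ * sSup ((|f ·|) '' {x | N x ≤ 1})))
      (δ * sSup ((|f ·|) '' {x | N x ≤ 1})) := by
  let _ : NormedAddCommGroup E := AddGroupNorm.toNormedAddCommGroup
    { toFun := N
      map_zero' := (hN_eq 0).2 rfl
      add_le' := hN_add
      neg' v := by simpa using hN_smul (-1) v
      eq_zero_of_map_eq_zero' v := (hN_eq v).1 }
  let _ : NormedSpace ℝ E := ⟨fun a v => (hN_smul a v).le⟩
  have hball : ∀ r, {v | N v ≤ r} = closedBall 0 r := fun r => by ext; simp; rfl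
  have hnorm : sSup ((|f ·|) '' {x | N x ≤ 1}) = ‖f.toContinuousLinearMap‖ := by
    rw [← f.toContinuousLinearMap.sSup_unitClosedBall_eq_norm, hball]; rfl
  rw [hnorm, hball]
  exact f.toContinuousLinearMap.image_closedBall_zero_eq_Icc hδ

theorem dualNorm_nonneg {p : ℕ} (N : (Fin p → ℝ) → ℝ) (θ : Fin p → ℝ) : 0 ≤ dualNorm N θ :=
  Real.sSup_nonneg (by rintro _ ⟨_, _, rfl⟩; exact abs_nonneg _)

theorem stmt2_general {p : ℕ} (N : (Fin p → ℝ) → ℝ)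
    (hN_eq : ∀ v, N v = 0 ↔ v = 0)
    (hN_smul : ∀ (a : ℝ) v, N (a • v) = |a| * N v)
    (hN_add : ∀ v w, N (v + w) ≤ N v + N w)
    (L : ℝ → ℝ) (hL_conv : ConvexOn ℝ Set.univ L)
    (x θ : Fin p → ℝ) (δ : ℝ) (hδ : 0 ≤ δ) :
    IsGreatest {v | ∃ Δx : Fin p → ℝ, N Δx ≤ δ ∧ v = L ((x + Δx) ⬝ᵥ θ)}
      (max (L (x ⬝ᵥ θ + δ * dualNorm N θ)) (L (x ⬝ᵥ θ - δ * dualNorm N θ))) := by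
  let f := dotProductBilin ℝ ℝ θ
  have hdual : dualNorm N θ = sSup ((|f ·|) '' {x | N x ≤ 1}) := by
    unfold dualNorm; congr 1; ext; simp [f, eq_comm]
  have hset : {v | ∃ Δx : Fin p → ℝ, N Δx ≤ δ ∧ v = L ((x + Δx) ⬝ᵥ θ)} =
      L '' ((x ⬝ᵥ θ + ·) '' (f '' {v | N v ≤ δ})) := by
    have hshift (Δx : Fin p → ℝ) : (x + Δx) ⬝ᵥ θ = x ⬝ᵥ θ + f Δx := by
      simp [f, add_dotProduct, dotProduct_comm θ]
    ext
    constructor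
    · rintro ⟨Δx, hΔx, rfl⟩
      exact ⟨_, ⟨_, ⟨Δx, hΔx, rfl⟩, rfl⟩, by rw [hshift]⟩
    · rintro ⟨_, ⟨_, ⟨Δx, hΔx, rfl⟩, rfl⟩, rfl⟩
      exact ⟨Δx, hΔx, by rw [hshift]⟩
  rw [hset, f.image_le_eq_Icc_of_norm_axioms hN_eq hN_smul hN_add hδ, ← hdual,
    image_const_add_Icc, ← sub_eq_add_neg, max_comm]
  exact ConvexOn.isGreatest_image_Icc (by linarith [mul_nonneg hδ (dualNorm_nonneg N θ)])
    (hL_conv.subset (subset_univ _) (convex_Icc _ _))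

theorem stmt2 {p : ℕ} (N : (Fin p → ℝ) → ℝ)
    (hN_eq : ∀ v, N v = 0 ↔ v = 0)
    (hN_smul : ∀ (a : ℝ) v, N (a • v) = |a| * N v)
    (hN_add : ∀ v w, N (v + w) ≤ N v + N w)
    (L : ℝ → ℝ) (hL_conv : ConvexOn ℝ Set.univ L) (hL_lsc : LowerSemicontinuous L)
    (x θ : Fin p → ℝ) (δ : ℝ) (hδ : 0 ≤ δ) :
    IsGreatest {v | ∃ Δx : Fin p → ℝ, N Δx ≤ δ ∧ v = L ((x + Δx) ⬝ᵥ θ)}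
      (max (L (x ⬝ᵥ θ + δ * dualNorm N θ)) (L (x ⬝ᵥ θ - δ * dualNorm N θ))) :=
  stmt2_general N hN_eq hN_smul hN_add L hL_conv x θ δ hδ
end

section
/- (Strong duality for minimum dual-norm interpolation) If X ∈ ℝ^{n×p} has full row rank, then min over θ with Xθ = y of ‖θ‖_* equals max over α ∈ ℝⁿ with ‖αᵀX‖ ≤ 1 of αᵀy. Moreover, θ̂ and α̂ are optimal for the respective problems if and only if Xᵀα̂ belongs to the subdifferential of ‖·‖_* at θ̂. -/
/-!
The primal value `F z = min {‖θ‖_* | X θ = z}` is finite for every `z` (since `X` is onto) and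
attained (since `‖·‖_*` is a norm on `ℝ^p`, hence continuous and coercive). It is sublinear in `z`,
so by Hahn–Banach it has a supporting linear functional `α` at `y`: `αᵀz ≤ F z` and `αᵀy = F y`.
Then `(αᵀX) θ ≤ ‖θ‖_*` for every `θ`, which by the bidual identity means `‖αᵀX‖ ≤ 1`; so `α` is
dual feasible with value `F y`, and weak duality `αᵀy = (αᵀX) θ ≤ ‖θ‖_*` does the rest. The
optimality condition is the description of subgradients of a sublinear `S`: `g` is one at `x` iff
`g ≤ S` and `g x = S x`.
-/

open Matrix

/-- The adversarial training risk `(1/n) ∑ᵢ (|yᵢ - xᵢᵀθ| + δ‖θ‖_*)²`. -/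
noncomputable def advRisk {n p : ℕ} (N : (Fin p → ℝ) → ℝ)
    (X : Matrix (Fin n) (Fin p) ℝ) (y : Fin n → ℝ) (δ : ℝ) (θ : Fin p → ℝ) : ℝ :=
  (1 / n : ℝ) * ∑ i, (|y i - X i ⬝ᵥ θ| + δ * dualNorm N θ) ^ 2

structure IsSublinear {E : Type*} [AddCommGroup E] [Module ℝ E] (S : E → ℝ) : Prop where
  map_smul_of_pos : ∀ c : ℝ, 0 < c → ∀ x, S (c • x) = c * S x
  map_add_le : ∀ x y, S (x + y) ≤ S x + S y

namespace IsSublinear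

section Module

variable {E : Type*} [AddCommGroup E] [Module ℝ E] {S : E → ℝ}

lemma of_map_smul_le (hsmul : ∀ c : ℝ, 0 < c → ∀ x, S (c • x) ≤ c * S x)
    (hadd : ∀ x y, S (x + y) ≤ S x + S y) : IsSublinear S := by
  refine ⟨fun c hc x => (hsmul c hc x).antisymm ?_, hadd⟩
  have h := hsmul c⁻¹ (inv_pos.mpr hc) (c • x)
  rw [inv_smul_smul₀ hc.ne'] at h
  exact (le_inv_mul_iff₀ hc).mp h

lemma map_zero (hS : IsSublinear S) : S 0 = 0 := by
  have h := hS.map_smul_of_pos 2 two_pos 0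
  rw [smul_zero] at h
  linarith

lemma mul_le_map_smul (hS : IsSublinear S) (c : ℝ) (x : E) : c * S x ≤ S (c • x) := by
  rcases lt_trichotomy c 0 with hc | rfl | hc
  · have h := hS.map_add_le x (-x)
    rw [add_neg_cancel, hS.map_zero] at h
    have hneg : S (c • x) = -c * S (-x) := by
      rw [← hS.map_smul_of_pos (-c) (neg_pos.mpr hc), neg_smul, smul_neg, neg_neg]
    rw [hneg]
    nlinarith
  · simp [hS.map_zero]
  · rw [hS.map_smul_of_pos c hc]

lemma map_smul_of_nonneg (hS : IsSublinear S) {c : ℝ} (hc : 0 ≤ c) (x : E) :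
    S (c • x) = c * S x := by
  rcases hc.eq_or_lt with rfl | hc
  · simp [hS.map_zero]
  · exact hS.map_smul_of_pos c hc x

lemma convexOn (hS : IsSublinear S) : ConvexOn ℝ Set.univ S :=
  ⟨convex_univ, fun x _ y _ a b ha hb _ => by
    simpa only [hS.map_smul_of_nonneg ha, hS.map_smul_of_nonneg hb, smul_eq_mul]
      using hS.map_add_le (a • x) (b • y)⟩

/-- Hahn–Banach, extending `t • w ↦ t * S w` from the line through `w`. -/
lemma exists_linearMap_le_eq (hS : IsSublinear S) (w : E) :
    ∃ g : E →ₗ[ℝ] ℝ, (∀ x, g x ≤ S x) ∧ g w = S w := by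
  have H : ∀ c : ℝ, c • w = 0 → c • S w = 0 := by
    intro c hc
    rcases smul_eq_zero.mp hc with rfl | rfl
    · exact zero_smul ℝ _
    · rw [hS.map_zero, smul_zero]
  let f := LinearPMap.mkSpanSingleton' (σ := RingHom.id ℝ) w (S w) H
  have hw : w ∈ f.domain := Submodule.mem_span_singleton_self w
  obtain ⟨g, hgf, hgS⟩ := exists_extension_of_le_sublinear f S hS.map_smul_of_pos hS.map_add_le
    (by
      rintro ⟨x, hx⟩
      obtain ⟨c, rfl⟩ := Submodule.mem_span_singleton.mp hx
      rw [LinearPMap.mkSpanSingleton'_apply]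
      exact hS.mul_le_map_smul c w)
  exact ⟨g, hgS, (hgf ⟨w, hw⟩).trans (LinearPMap.mkSpanSingleton'_apply_self w (S w) H hw)⟩

lemma subgradient_iff (hS : IsSublinear S) (g : E →ₗ[ℝ] ℝ) (x : E) :
    (∀ y, S x + g (y - x) ≤ S y) ↔ (∀ y, g y ≤ S y) ∧ g x = S x := by
  constructor
  · intro h
    have h₀ := h 0
    have h₂ := h ((2 : ℝ) • x)
    rw [hS.map_zero, zero_sub, map_neg] at h₀
    rw [hS.map_smul_of_pos 2 two_pos, two_smul, add_sub_cancel_right] at h₂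
    have hgx : g x = S x := by linarith
    refine ⟨fun y => ?_, hgx⟩
    have := h y
    rw [map_sub, hgx] at this
    linarith
  · rintro ⟨hle, hgx⟩ y
    rw [map_sub, hgx, add_sub_cancel]
    exact hle y

end Module

section FiniteDimensional

variable {E : Type*} [NormedAddCommGroup E] [NormedSpace ℝ E] [FiniteDimensional ℝ E]
  {S : E → ℝ}

lemma continuous (hS : IsSublinear S) : Continuous S :=
  hS.convexOn.locallyLipschitz.continuous

lemma exists_pos_mul_norm_le (hS : IsSublinear S) (hpos : ∀ x, x ≠ 0 → 0 < S x) :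
    ∃ c > 0, ∀ x, c * ‖x‖ ≤ S x := by
  rcases subsingleton_or_nontrivial E with hE | hE
  · exact ⟨1, one_pos, fun x => by simp [Subsingleton.elim x 0, hS.map_zero]⟩
  obtain ⟨u, hu, hmin⟩ := (isCompact_sphere (0 : E) 1).exists_isMinOn
    (NormedSpace.sphere_nonempty.mpr zero_le_one) hS.continuous.continuousOn
  have hu₁ : ‖u‖ = 1 := by simpa using hu
  refine ⟨S u, hpos u (norm_ne_zero_iff.mp (by simp [hu₁])), fun x => ?_⟩
  rcases eq_or_ne x 0 with rfl | hx
  · simp [hS.map_zero]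
  have hnx : 0 < ‖x‖ := norm_pos_iff.mpr hx
  have hmem : ‖x‖⁻¹ • x ∈ Metric.sphere (0 : E) 1 := by
    simp [norm_smul, hnx.ne']
  calc S u * ‖x‖ ≤ S (‖x‖⁻¹ • x) * ‖x‖ := by gcongr; exact hmin hmem
    _ = S x := by rw [hS.map_smul_of_pos _ (inv_pos.mpr hnx)]; field_simp

lemma isCompact_setOf_le (hS : IsSublinear S) (hpos : ∀ x, x ≠ 0 → 0 < S x) (r : ℝ) :
    IsCompact {x | S x ≤ r} := by
  obtain ⟨c, hc, hcS⟩ := hS.exists_pos_mul_norm_le hpos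
  refine Metric.isCompact_of_isClosed_isBounded
    (isClosed_le hS.continuous continuous_const) ((Metric.isBounded_closedBall
      (x := 0) (r := r / c)).subset fun x hx => ?_)
  rw [mem_closedBall_zero_iff, le_div_iff₀' hc]
  exact (hcS x).trans hx

lemma exists_isMinOn (hS : IsSublinear S) (hpos : ∀ x, x ≠ 0 → 0 < S x) {s : Set E}
    (hs : IsClosed s) (hne : s.Nonempty) : ∃ x ∈ s, IsMinOn S s x := by
  obtain ⟨x₀, hx₀⟩ := hne
  have hx₀' : x₀ ∈ s ∩ {x | S x ≤ S x₀} := ⟨hx₀, show S x₀ ≤ S x₀ from le_rfl⟩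
  obtain ⟨x, ⟨hxs, -⟩, hmin⟩ := ((hS.isCompact_setOf_le hpos (S x₀)).inter_left hs).exists_isMinOn
    ⟨x₀, hx₀'⟩ hS.continuous.continuousOn
  refine ⟨x, hxs, fun y hy => ?_⟩
  by_cases hy₀ : S y ≤ S x₀
  · exact hmin ⟨hy, hy₀⟩
  · exact (hmin hx₀').trans (le_of_not_ge hy₀)

end FiniteDimensional

lemma exists_dotProduct_le_eq {ι : Type*} [Fintype ι] [DecidableEq ι] {S : (ι → ℝ) → ℝ}
    (hS : IsSublinear S) (w : ι → ℝ) : ∃ a : ι → ℝ, (∀ x, a ⬝ᵥ x ≤ S x) ∧ a ⬝ᵥ w = S w := by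
  obtain ⟨g, hgS, hgw⟩ := hS.exists_linearMap_le_eq w
  refine ⟨(dotProductEquiv ℝ _).symm g, ?_⟩
  simp only [← dotProductEquiv_apply_apply, LinearEquiv.apply_symm_apply]
  exact ⟨hgS, hgw⟩

end IsSublinear

structure IsNorm {E : Type*} [AddCommGroup E] [Module ℝ E] (N : E → ℝ) : Prop where
  eq_zero_iff : ∀ v, N v = 0 ↔ v = 0
  map_smul : ∀ (a : ℝ) v, N (a • v) = |a| * N v
  map_add_le : ∀ v w, N (v + w) ≤ N v + N w

namespace IsNorm

variable {E : Type*} [AddCommGroup E] [Module ℝ E] {N : E → ℝ}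

lemma isSublinear (hN : IsNorm N) : IsSublinear N :=
  ⟨fun c hc x => by rw [hN.map_smul, abs_of_pos hc], hN.map_add_le⟩

lemma map_neg (hN : IsNorm N) (x : E) : N (-x) = N x := by
  rw [← neg_one_smul ℝ x, hN.map_smul, abs_neg, abs_one, one_mul]

lemma pos (hN : IsNorm N) {x : E} (hx : x ≠ 0) : 0 < N x := by
  have h := hN.map_add_le x (-x)
  rw [add_neg_cancel, hN.isSublinear.map_zero, hN.map_neg] at h
  exact lt_of_le_of_ne (by linarith) fun h₀ => hx ((hN.eq_zero_iff x).mp h₀.symm)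

end IsNorm

section DualNorm

variable {p : ℕ} {N : (Fin p → ℝ) → ℝ}

lemma bddAbove_abs_dotProduct (hN : IsNorm N) (θ : Fin p → ℝ) :
    BddAbove {v | ∃ x : Fin p → ℝ, N x ≤ 1 ∧ v = |θ ⬝ᵥ x|} := by
  refine ((hN.isSublinear.isCompact_setOf_le (fun _ => hN.pos) 1).bddAbove_image
    (f := fun x => |θ ⬝ᵥ x|) (by fun_prop)).mono ?_
  rintro _ ⟨x, hx, rfl⟩
  exact ⟨x, hx, rfl⟩

lemma abs_dotProduct_le_dualNorm (hN : IsNorm N) (θ : Fin p → ℝ) {x : Fin p → ℝ}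
    (hx : N x ≤ 1) : |θ ⬝ᵥ x| ≤ dualNorm N θ :=
  le_csSup (bddAbove_abs_dotProduct hN θ) ⟨x, hx, rfl⟩

lemma dotProduct_le_dualNorm (hN : IsNorm N) {w : Fin p → ℝ} (hw : N w ≤ 1)
    (θ : Fin p → ℝ) : w ⬝ᵥ θ ≤ dualNorm N θ :=
  dotProduct_comm θ w ▸ (le_abs_self _).trans (abs_dotProduct_le_dualNorm hN θ hw)

lemma dualNorm_le (hN : IsNorm N) {θ : Fin p → ℝ} {b : ℝ}
    (hb : ∀ x, N x ≤ 1 → |θ ⬝ᵥ x| ≤ b) : dualNorm N θ ≤ b :=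
  csSup_le ⟨_, 0, by simp [hN.isSublinear.map_zero], rfl⟩ (by rintro _ ⟨x, hx, rfl⟩; exact hb x hx)

lemma isSublinear_dualNorm (hN : IsNorm N) : IsSublinear (dualNorm N) := by
  refine .of_map_smul_le (fun c hc θ => dualNorm_le hN fun x hx => ?_)
    (fun θ φ => dualNorm_le hN fun x hx => ?_)
  · rw [smul_dotProduct, smul_eq_mul, abs_mul, abs_of_pos hc]
    exact mul_le_mul_of_nonneg_left (abs_dotProduct_le_dualNorm hN θ hx) hc.le
  · rw [add_dotProduct]
    exact (abs_add_le _ _).trans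
      (add_le_add (abs_dotProduct_le_dualNorm hN θ hx) (abs_dotProduct_le_dualNorm hN φ hx))

lemma dualNorm_pos (hN : IsNorm N) {θ : Fin p → ℝ} (hθ : θ ≠ 0) : 0 < dualNorm N θ := by
  have hNθ := hN.pos hθ
  refine lt_of_lt_of_le ?_ (abs_dotProduct_le_dualNorm hN θ (x := (N θ)⁻¹ • θ) ?_)
  · rw [dotProduct_smul, smul_eq_mul, abs_pos]
    exact mul_ne_zero (inv_ne_zero hNθ.ne') (dotProduct_self_eq_zero.not.mpr hθ)
  · rw [hN.map_smul, abs_of_pos (inv_pos.mpr hNθ), inv_mul_cancel₀ hNθ.ne']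

/-- Bidual identity: a norming functional for `w` (Hahn–Banach) has dual norm at most one. -/
lemma le_one_of_dotProduct_le_dualNorm (hN : IsNorm N) {w : Fin p → ℝ}
    (hw : ∀ θ, w ⬝ᵥ θ ≤ dualNorm N θ) : N w ≤ 1 := by
  obtain ⟨a, haN, haw⟩ := hN.isSublinear.exists_dotProduct_le_eq w
  have ha : dualNorm N a ≤ 1 := dualNorm_le hN fun x hx => abs_le.mpr
    ⟨by linarith [haN (-x), hN.map_neg x, dotProduct_neg a x], (haN x).trans hx⟩
  rw [← haw, dotProduct_comm]
  exact (hw a).trans ha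

lemma subgradient_dualNorm_iff (hN : IsNorm N) (θ₀ w : Fin p → ℝ) :
    (∀ θ, dualNorm N θ₀ + w ⬝ᵥ (θ - θ₀) ≤ dualNorm N θ) ↔
      N w ≤ 1 ∧ w ⬝ᵥ θ₀ = dualNorm N θ₀ := by
  have h := (isSublinear_dualNorm hN).subgradient_iff (dotProductEquiv ℝ _ w) θ₀
  simp only [dotProductEquiv_apply_apply] at h
  rw [h]
  exact and_congr_left' ⟨le_one_of_dotProduct_le_dualNorm hN, dotProduct_le_dualNorm hN⟩

end DualNorm

lemma Matrix.mulVec_surjective_of_rank_eq {K : Type*} [Field K] {m n : ℕ}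
    {X : Matrix (Fin m) (Fin n) K} (hrank : X.rank = m) : Function.Surjective X.mulVec := by
  have h : LinearMap.range X.mulVecLin = ⊤ := by
    apply Submodule.eq_top_of_finrank_eq
    rw [← Matrix.rank, hrank, Module.finrank_fin_fun]
  exact LinearMap.range_eq_top.mp h

section Interpolation

variable {n p : ℕ} {N : (Fin p → ℝ) → ℝ} {X : Matrix (Fin n) (Fin p) ℝ}

noncomputable def minInterpNorm (N : (Fin p → ℝ) → ℝ) (X : Matrix (Fin n) (Fin p) ℝ)
    (z : Fin n → ℝ) : ℝ :=
  sInf {v | ∃ θ : Fin p → ℝ, X *ᵥ θ = z ∧ v = dualNorm N θ}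

lemma isLeast_minInterpNorm (hN : IsNorm N) (hrank : X.rank = n) (z : Fin n → ℝ) :
    IsLeast {v | ∃ θ : Fin p → ℝ, X *ᵥ θ = z ∧ v = dualNorm N θ} (minInterpNorm N X z) := by
  obtain ⟨θ, hθ, hmin⟩ := (isSublinear_dualNorm hN).exists_isMinOn (fun _ => dualNorm_pos hN)
    (isClosed_eq (by fun_prop) continuous_const : IsClosed {θ | X *ᵥ θ = z})
    (Matrix.mulVec_surjective_of_rank_eq hrank z)
  have h : IsLeast {v | ∃ θ : Fin p → ℝ, X *ᵥ θ = z ∧ v = dualNorm N θ} (dualNorm N θ) :=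
    ⟨⟨θ, hθ, rfl⟩, by rintro _ ⟨θ', hθ', rfl⟩; exact hmin hθ'⟩
  rwa [minInterpNorm, h.csInf_eq]

lemma isSublinear_minInterpNorm (hN : IsNorm N) (hrank : X.rank = n) :
    IsSublinear (minInterpNorm N X) := by
  have hD := isSublinear_dualNorm hN
  have hF := isLeast_minInterpNorm hN hrank
  refine .of_map_smul_le (fun c hc z => ?_) (fun z₁ z₂ => ?_)
  · obtain ⟨θ, hθ, hFz⟩ := (hF z).1
    rw [hFz, ← hD.map_smul_of_pos c hc]
    exact (hF _).2 ⟨c • θ, by rw [mulVec_smul, hθ], rfl⟩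
  · obtain ⟨θ₁, hθ₁, h₁⟩ := (hF z₁).1
    obtain ⟨θ₂, hθ₂, h₂⟩ := (hF z₂).1
    rw [h₁, h₂]
    exact ((hF _).2 ⟨θ₁ + θ₂, by rw [mulVec_add, hθ₁, hθ₂], rfl⟩).trans (hD.map_add_le θ₁ θ₂)

lemma dotProduct_le_dualNorm_of_mulVec_eq (hN : IsNorm N) {θ : Fin p → ℝ} {α y : Fin n → ℝ}
    (hθ : X *ᵥ θ = y) (hα : N (α ᵥ* X) ≤ 1) : α ⬝ᵥ y ≤ dualNorm N θ := by
  rw [← hθ, dotProduct_mulVec]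
  exact dotProduct_le_dualNorm hN hα θ

lemma exists_dotProduct_eq_minInterpNorm (hN : IsNorm N) (hrank : X.rank = n) (y : Fin n → ℝ) :
    ∃ α : Fin n → ℝ, N (α ᵥ* X) ≤ 1 ∧ α ⬝ᵥ y = minInterpNorm N X y := by
  obtain ⟨α, hαF, hαy⟩ := (isSublinear_minInterpNorm hN hrank).exists_dotProduct_le_eq y
  refine ⟨α, le_one_of_dotProduct_le_dualNorm hN fun θ => ?_, hαy⟩
  rw [← dotProduct_mulVec]
  exact (hαF _).trans ((isLeast_minInterpNorm hN hrank _).2 ⟨θ, rfl, rfl⟩)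

end Interpolation

theorem stmt6 {n p : ℕ} (N : (Fin p → ℝ) → ℝ)
    (hN_eq : ∀ v, N v = 0 ↔ v = 0)
    (hN_smul : ∀ (a : ℝ) v, N (a • v) = |a| * N v)
    (hN_add : ∀ v w, N (v + w) ≤ N v + N w)
    (X : Matrix (Fin n) (Fin p) ℝ) (y : Fin n → ℝ)
    (hrank : X.rank = n) :
    (∃ m : ℝ,
      IsLeast {v | ∃ θ : Fin p → ℝ, X *ᵥ θ = y ∧ v = dualNorm N θ} m ∧
      IsGreatest {v | ∃ α : Fin n → ℝ, N (α ᵥ* X) ≤ 1 ∧ v = α ⬝ᵥ y} m) ∧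
    (∀ (θh : Fin p → ℝ) (αh : Fin n → ℝ), X *ᵥ θh = y → N (αh ᵥ* X) ≤ 1 →
      (((∀ θ : Fin p → ℝ, X *ᵥ θ = y → dualNorm N θh ≤ dualNorm N θ) ∧
        (∀ α : Fin n → ℝ, N (α ᵥ* X) ≤ 1 → α ⬝ᵥ y ≤ αh ⬝ᵥ y)) ↔
        (∀ θ : Fin p → ℝ, dualNorm N θh + (αh ᵥ* X) ⬝ᵥ (θ - θh) ≤ dualNorm N θ))) := by
  have hN : IsNorm N := ⟨hN_eq, hN_smul, hN_add⟩
  have weak : ∀ {θ α}, X *ᵥ θ = y → N (α ᵥ* X) ≤ 1 → α ⬝ᵥ y ≤ dualNorm N θ :=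
    dotProduct_le_dualNorm_of_mulVec_eq hN
  have hprimal := isLeast_minInterpNorm hN hrank y
  obtain ⟨θs, hθs, hθs_eq⟩ := hprimal.1
  obtain ⟨αs, hαs, hαs_eq⟩ := exists_dotProduct_eq_minInterpNorm hN hrank y
  refine ⟨⟨_, hprimal, ⟨αs, hαs, hαs_eq.symm⟩, ?_⟩, fun θh αh hθh hαh => ?_⟩
  · rintro _ ⟨α, hα, rfl⟩
    exact hθs_eq ▸ weak hθs hα
  rw [subgradient_dualNorm_iff hN, ← dotProduct_mulVec, hθh, and_iff_right hαh]
  constructor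
  · rintro ⟨hθh_opt, hαh_opt⟩
    refine (weak hθh hαh).antisymm ?_
    calc dualNorm N θh ≤ dualNorm N θs := hθh_opt θs hθs
      _ = αs ⬝ᵥ y := by rw [hαs_eq, hθs_eq]
      _ ≤ αh ⬝ᵥ y := hαh_opt αs hαs
  · intro h
    exact ⟨fun θ hθ => h ▸ weak hθ hαh, fun α hα => h.symm ▸ weak hθh hα⟩
end
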